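/- arXiv:1412.8365 — 2 statements merged into one kernel-verified Lean document; each statement's English description precedes it below -/
import Mathlib

section
/- Suppose S ∈ ℝ^{n×n} is symmetric positive definite and satisfies the algebraic Riccati equation S A₀ + A₀ᵀ S + F_m + Q − S B R⁻¹ Bᵀ S = 0 with Q > 0, R > 0 symmetric, and F_m ⪰ φᵀ R φ for a fixed matrix φ ∈ ℝ^{m×n}. Let K₁ := −R⁻¹BᵀS and V(x) := xᵀSx. Then along trajectories of ẋ = (A₀ + B K₁ + B φ)x one has V̇(x) = −xᵀ[(F_m − φᵀRφ) + Q + (K₁+φ)ᵀR(K₁+φ)]x, and hence V̇(x) ≤ −xᵀQx < 0 for all x ≠ 0. -/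
/-!
Along `ẋ = Mx` the derivative of `V(x) = xᵀSx` is the quadratic form of `SM + MᵀS`. For the
closed loop `M = A₀ + BK₁ + Bφ`, completing the square in `K₁ + φ` and substituting the Riccati
equation turns `SM + MᵀS` into `−[(Fₘ − φᵀRφ) + Q + (K₁+φ)ᵀR(K₁+φ)]`, whose first and last
summands are positive semidefinite.
-/

open Matrix

namespace Matrix

variable {α m n : Type*} [CommRing α] [Fintype m] [Fintype n]

theorem IsSymm.two_mul_dotProduct_mulVec_mulVec {S : Matrix n n α} (hS : S.IsSymm)
    (M : Matrix n n α) (x : n → α) :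
    2 * (x ⬝ᵥ S *ᵥ M *ᵥ x) = x ⬝ᵥ (S * M + Mᵀ * S) *ᵥ x := by
  have hMS : x ⬝ᵥ (Mᵀ * S) *ᵥ x = x ⬝ᵥ (S * M) *ᵥ x := by
    rw [← dotProduct_transpose_mulVec (S * M), transpose_mul, hS.eq]
  rw [add_mulVec, dotProduct_add, hMS, mulVec_mulVec]
  ring

variable [DecidableEq m]

theorem riccati_closedLoop_lyapunov_eq {A S Q F : Matrix n n α} {B : Matrix n m α}
    {R : Matrix m m α} {φ K : Matrix m n α} (hS : S.IsSymm) (hR : R.IsSymm)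
    (hRdet : IsUnit R.det) (hK : K = -(R⁻¹ * Bᵀ * S))
    (hric : S * A + Aᵀ * S + F + Q - S * B * R⁻¹ * Bᵀ * S = 0) :
    S * (A + B * K + B * φ) + (A + B * K + B * φ)ᵀ * S
      = -((F - φᵀ * R * φ) + Q + (K + φ)ᵀ * R * (K + φ)) := by
  have hRinv : R⁻¹ᵀ = R⁻¹ := by rw [transpose_nonsing_inv, hR.eq]
  have hG : S * (B * (R⁻¹ * (Bᵀ * S))) = S * A + Aᵀ * S + F + Q := by
    simpa only [Matrix.mul_assoc] using (sub_eq_zero.mp hric).symm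
  subst hK
  simp only [transpose_add, transpose_mul, transpose_neg, transpose_transpose, hS.eq, hRinv,
    Matrix.mul_add, Matrix.add_mul, Matrix.mul_neg, Matrix.neg_mul, Matrix.mul_assoc,
    nonsing_inv_mul_cancel_left _ _ hRdet, mul_nonsing_inv_cancel_left _ _ hRdet, hG]
  abel

end Matrix

theorem riccati_robust_stability_general {n m : ℕ}
    (A0 : Matrix (Fin n) (Fin n) ℝ) (B : Matrix (Fin n) (Fin m) ℝ)
    (S Q Fm : Matrix (Fin n) (Fin n) ℝ) (R : Matrix (Fin m) (Fin m) ℝ)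
    (φ : Matrix (Fin m) (Fin n) ℝ)
    (hS : S.PosDef) (hQ : Q.PosDef) (hR : R.PosDef)
    (hFmφ : (Fm - φᵀ * R * φ).PosSemidef)
    (hric : S * A0 + A0ᵀ * S + Fm + Q - S * B * R⁻¹ * Bᵀ * S = 0) :
    letI K₁ : Matrix (Fin m) (Fin n) ℝ := -(R⁻¹ * Bᵀ * S)
    ∀ x : Fin n → ℝ,
      -- `V̇(x) = 2 xᵀ S ẋ` along `ẋ = (A₀ + BK₁ + Bφ)x`
      (2 * (x ⬝ᵥ S.mulVec ((A0 + B * K₁ + B * φ).mulVec x))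
        = -(x ⬝ᵥ ((Fm - φᵀ * R * φ) + Q + (K₁ + φ)ᵀ * R * (K₁ + φ)).mulVec x)) ∧
      2 * (x ⬝ᵥ S.mulVec ((A0 + B * K₁ + B * φ).mulVec x)) ≤ -(x ⬝ᵥ Q.mulVec x) ∧
      (x ≠ 0 → 2 * (x ⬝ᵥ S.mulVec ((A0 + B * K₁ + B * φ).mulVec x)) < 0) := by
  intro x
  set K₁ : Matrix (Fin m) (Fin n) ℝ := -(R⁻¹ * Bᵀ * S) with hK₁
  have hSsymm : S.IsSymm := (conjTranspose_eq_transpose_of_trivial S).symm.trans hS.isHermitian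
  have hRsymm : R.IsSymm := (conjTranspose_eq_transpose_of_trivial R).symm.trans hR.isHermitian
  have hV : 2 * (x ⬝ᵥ S *ᵥ (A0 + B * K₁ + B * φ) *ᵥ x)
      = -(x ⬝ᵥ ((Fm - φᵀ * R * φ) + Q + (K₁ + φ)ᵀ * R * (K₁ + φ)) *ᵥ x) := by
    rw [hSsymm.two_mul_dotProduct_mulVec_mulVec, riccati_closedLoop_lyapunov_eq hSsymm hRsymm
      hR.det_pos.ne'.isUnit hK₁ hric, neg_mulVec, dotProduct_neg]
  have hpsd : 0 ≤ x ⬝ᵥ ((Fm - φᵀ * R * φ) + (K₁ + φ)ᵀ * R * (K₁ + φ)) *ᵥ x := by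
    have h := hR.posSemidef.conjTranspose_mul_mul_same (K₁ + φ)
    rw [conjTranspose_eq_transpose_of_trivial] at h
    simpa using (hFmφ.add h).dotProduct_mulVec_nonneg x
  have hsplit : x ⬝ᵥ ((Fm - φᵀ * R * φ) + Q + (K₁ + φ)ᵀ * R * (K₁ + φ)) *ᵥ x
      = x ⬝ᵥ ((Fm - φᵀ * R * φ) + (K₁ + φ)ᵀ * R * (K₁ + φ)) *ᵥ x + x ⬝ᵥ Q *ᵥ x := by
    simp only [add_mulVec, dotProduct_add]
    ring
  refine ⟨hV, by linarith, fun hx => ?_⟩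
  have hQx : 0 < x ⬝ᵥ Q *ᵥ x := by simpa using hQ.dotProduct_mulVec_pos hx
  linarith

/-- If `S ≻ 0` solves the Riccati equation `S A₀ + A₀ᵀ S + Fₘ + Q − S B R⁻¹ Bᵀ S = 0`
with `Q ≻ 0`, `R ≻ 0` and `Fₘ ⪰ φᵀ R φ`, and `K₁ = −R⁻¹BᵀS`, `V(x) = xᵀSx`, then along
`ẋ = (A₀ + BK₁ + Bφ)x` we have
`V̇(x) = −xᵀ[(Fₘ − φᵀRφ) + Q + (K₁+φ)ᵀR(K₁+φ)]x ≤ −xᵀQx < 0` for `x ≠ 0`. -/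
theorem riccati_robust_stability {n m : ℕ}
    (A0 : Matrix (Fin n) (Fin n) ℝ) (B : Matrix (Fin n) (Fin m) ℝ)
    (S Q Fm : Matrix (Fin n) (Fin n) ℝ) (R : Matrix (Fin m) (Fin m) ℝ)
    (φ : Matrix (Fin m) (Fin n) ℝ)
    (hS : S.PosDef) (hQ : Q.PosDef) (hR : R.PosDef)
    (hFm : Fm.IsHermitian) (hFmφ : (Fm - φᵀ * R * φ).PosSemidef)
    (hric : S * A0 + A0ᵀ * S + Fm + Q - S * B * R⁻¹ * Bᵀ * S = 0) :
    letI K₁ : Matrix (Fin m) (Fin n) ℝ := -(R⁻¹ * Bᵀ * S)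
    ∀ x : Fin n → ℝ,
      -- `V̇(x) = 2 xᵀ S ẋ` along `ẋ = (A₀ + BK₁ + Bφ)x`
      (2 * (x ⬝ᵥ S.mulVec ((A0 + B * K₁ + B * φ).mulVec x))
        = -(x ⬝ᵥ ((Fm - φᵀ * R * φ) + Q + (K₁ + φ)ᵀ * R * (K₁ + φ)).mulVec x)) ∧
      2 * (x ⬝ᵥ S.mulVec ((A0 + B * K₁ + B * φ).mulVec x)) ≤ -(x ⬝ᵥ Q.mulVec x) ∧
      (x ≠ 0 → 2 * (x ⬝ᵥ S.mulVec ((A0 + B * K₁ + B * φ).mulVec x)) < 0) :=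
  riccati_robust_stability_general A0 B S Q Fm R φ hS hQ hR hFmφ hric
end

section
/- Suppose V : ℝⁿ → ℝ is continuous with α₁(‖x‖) ≤ V(x) ≤ α₂(‖x‖) for class-K∞ functions α₁, α₂, and along trajectories V̇ ≤ −c₁‖x‖² + c₂‖e‖² for constants c₁, c₂ > 0. If the triggering rule enforces ‖e(t)‖² ≤ (σc₁/c₂)‖x(t)‖² for σ ∈ (0,1) at all times, then V̇ ≤ −(1−σ)c₁‖x(t)‖² for all t, and hence x(t) → 0 as t → ∞ along any bounded trajectory. -/
open Filter Topology

/-!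
The trigger rule turns the dissipation inequality into `V̇ ≤ -(1 - σ) c₁ ‖x‖²`, so `V ∘ x` is
nonincreasing. Being bounded below by `α₁ 0 = 0`, it cannot decrease at a uniform rate forever,
so `‖x T‖` is arbitrarily small at some time `T`; then
`α₁ ‖x t‖ ≤ V (x t) ≤ V (x T) ≤ α₂ ‖x T‖` keeps `‖x t‖` small for all `t ≥ T`.
-/

theorem not_bddBelow_range_of_hasDerivAt_le_neg {f f' : ℝ → ℝ} {κ : ℝ} (hκ : 0 < κ)
    (hf : ∀ t, HasDerivAt f (f' t) t) (hf' : ∀ t, f' t ≤ -κ) :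
    ¬ BddBelow (Set.range f) := by
  rintro ⟨m, hm⟩
  have hdecay {t : ℝ} (ht : 0 ≤ t) : f t - f 0 ≤ -κ * (t - 0) :=
    image_sub_le_mul_sub_of_deriv_le (fun t => (hf t).differentiableAt)
      (fun t => (hf t).deriv ▸ hf' t) ht
  have hm0 : m ≤ f 0 := hm (Set.mem_range_self 0)
  set T := (f 0 - m + 1) / κ
  have hT : κ * T = f 0 - m + 1 := mul_div_cancel₀ _ hκ.ne'
  have := hdecay (div_nonneg (by linarith) hκ.le : 0 ≤ T)
  have := hm (Set.mem_range_self T)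
  linarith

theorem exists_norm_lt_of_hasDerivAt_le_neg_sq {E : Type*} [SeminormedAddCommGroup E]
    {W W' : ℝ → ℝ} {x : ℝ → E} {κ δ : ℝ} (hκ : 0 < κ) (hδ : 0 < δ)
    (hW : BddBelow (Set.range W)) (hWd : ∀ t, HasDerivAt W (W' t) t)
    (hW' : ∀ t, W' t ≤ -κ * ‖x t‖ ^ 2) :
    ∃ t, ‖x t‖ < δ := by
  by_contra! hfar
  refine not_bddBelow_range_of_hasDerivAt_le_neg (mul_pos hκ (pow_pos hδ 2)) hWd
    (fun t => ?_) hW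
  have : δ ^ 2 ≤ ‖x t‖ ^ 2 := pow_le_pow_left₀ hδ.le (hfar t) 2
  nlinarith [hW' t]

theorem tendsto_nhds_zero_of_lyapunov {E : Type*} [SeminormedAddCommGroup E]
    {W W' α₁ α₂ : ℝ → ℝ} {x : ℝ → E} {κ : ℝ} (hκ : 0 < κ)
    (hα₁ : StrictMono α₁) (hα₁0 : α₁ 0 = 0) (hα₂ : Tendsto α₂ (𝓝 0) (𝓝 0))
    (hlow : ∀ t, α₁ ‖x t‖ ≤ W t) (hup : ∀ t, W t ≤ α₂ ‖x t‖)
    (hWd : ∀ t, HasDerivAt W (W' t) t) (hW' : ∀ t, W' t ≤ -κ * ‖x t‖ ^ 2) :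
    Tendsto x atTop (𝓝 0) := by
  have hW0 (t : ℝ) : 0 ≤ W t := hα₁0 ▸ (hα₁.monotone (norm_nonneg _)).trans (hlow t)
  have hanti : Antitone W :=
    antitone_of_deriv_nonpos (fun t => (hWd t).differentiableAt) fun t =>
      (hWd t).deriv ▸ (hW' t).trans (by nlinarith [sq_nonneg ‖x t‖])
  refine Metric.tendsto_atTop.2 fun ε hε => ?_
  have hpos : 0 < α₁ ε := hα₁0 ▸ hα₁ hε
  obtain ⟨η, hη, hα₂η⟩ := Metric.tendsto_nhds_nhds.1 hα₂ _ hpos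
  obtain ⟨T, hT⟩ := exists_norm_lt_of_hasDerivAt_le_neg_sq hκ hη
    ⟨0, Set.forall_mem_range.2 hW0⟩ hWd hW'
  refine ⟨T, fun t ht => ?_⟩
  rw [dist_zero_right, ← hα₁.lt_iff_lt]
  calc α₁ ‖x t‖ ≤ W t := hlow t
    _ ≤ W T := hanti ht
    _ ≤ α₂ ‖x T‖ := hup T
    _ < α₁ ε := (le_abs_self _).trans_lt (by simpa using hα₂η (by simpa using hT))

theorem iss_event_trigger_abstract_general {n : ℕ}
    (V : EuclideanSpace ℝ (Fin n) → ℝ)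
    (α₁ α₂ : ℝ → ℝ)
    (hα₁ : StrictMono α₁ ∧ Continuous α₁ ∧ α₁ 0 = 0 ∧ Tendsto α₁ atTop atTop)
    (hα₂ : StrictMono α₂ ∧ Continuous α₂ ∧ α₂ 0 = 0 ∧ Tendsto α₂ atTop atTop)
    (hsandwich : ∀ z, α₁ ‖z‖ ≤ V z ∧ V z ≤ α₂ ‖z‖)
    (c₁ c₂ σ : ℝ) (hc₁ : 0 < c₁) (hc₂ : 0 < c₂) (hσ : σ ∈ Set.Ioo (0 : ℝ) 1)
    (x e : ℝ → EuclideanSpace ℝ (Fin n)) (Vd : ℝ → ℝ)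
    (hV : ∀ t, HasDerivAt (fun s => V (x s)) (Vd t) t)
    (hVd : ∀ t, Vd t ≤ -c₁ * ‖x t‖ ^ 2 + c₂ * ‖e t‖ ^ 2)
    (htrig : ∀ t, ‖e t‖ ^ 2 ≤ (σ * c₁ / c₂) * ‖x t‖ ^ 2) :
    (∀ t, Vd t ≤ -(1 - σ) * c₁ * ‖x t‖ ^ 2) ∧
    (Bornology.IsBounded (Set.range x) → Tendsto x atTop (𝓝 0)) := by
  have hdecay (t : ℝ) : Vd t ≤ -(1 - σ) * c₁ * ‖x t‖ ^ 2 := by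
    have hdominated : c₂ * ‖e t‖ ^ 2 ≤ σ * c₁ * ‖x t‖ ^ 2 :=
      (le_div_iff₀' hc₂).1 ((htrig t).trans_eq (div_mul_eq_mul_div _ _ _))
    linarith [hVd t]
  refine ⟨hdecay, fun _ => ?_⟩
  exact tendsto_nhds_zero_of_lyapunov (mul_pos (sub_pos.2 hσ.2) hc₁) hα₁.1 hα₁.2.2.1
    (hα₂.2.1.tendsto' 0 0 hα₂.2.2.1) (fun t => (hsandwich (x t)).1)
    (fun t => (hsandwich (x t)).2) hV (fun t => (hdecay t).trans_eq (by ring))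

/-- Abstract ISS-based event-triggering argument: `V` is an ISS Lyapunov function
with class-`K∞` bounds `α₁(‖x‖) ≤ V(x) ≤ α₂(‖x‖)` and
`V̇ ≤ −c₁‖x‖² + c₂‖e‖²`; if the triggering rule enforces
`‖e(t)‖² ≤ (σc₁/c₂)‖x(t)‖²` with `σ ∈ (0,1)`, then
`V̇ ≤ −(1−σ)c₁‖x(t)‖²` for all `t`, and `x(t) → 0` along any bounded trajectory. -/
theorem iss_event_trigger_abstract {n : ℕ}
    (V : EuclideanSpace ℝ (Fin n) → ℝ) (hVcont : Continuous V)
    (α₁ α₂ : ℝ → ℝ)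
    (hα₁ : StrictMono α₁ ∧ Continuous α₁ ∧ α₁ 0 = 0 ∧ Tendsto α₁ atTop atTop)
    (hα₂ : StrictMono α₂ ∧ Continuous α₂ ∧ α₂ 0 = 0 ∧ Tendsto α₂ atTop atTop)
    (hsandwich : ∀ z, α₁ ‖z‖ ≤ V z ∧ V z ≤ α₂ ‖z‖)
    (c₁ c₂ σ : ℝ) (hc₁ : 0 < c₁) (hc₂ : 0 < c₂) (hσ : σ ∈ Set.Ioo (0 : ℝ) 1)
    (x e : ℝ → EuclideanSpace ℝ (Fin n)) (Vd : ℝ → ℝ)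
    (hV : ∀ t, HasDerivAt (fun s => V (x s)) (Vd t) t)
    (hVd : ∀ t, Vd t ≤ -c₁ * ‖x t‖ ^ 2 + c₂ * ‖e t‖ ^ 2)
    (htrig : ∀ t, ‖e t‖ ^ 2 ≤ (σ * c₁ / c₂) * ‖x t‖ ^ 2) :
    (∀ t, Vd t ≤ -(1 - σ) * c₁ * ‖x t‖ ^ 2) ∧
    (Bornology.IsBounded (Set.range x) → Tendsto x atTop (𝓝 0)) :=
  iss_event_trigger_abstract_general V α₁ α₂ hα₁ hα₂ hsandwich c₁ c₂ σ hc₁ hc₂ hσ x e Vd hV hVd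
    htrig
end
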